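/- arXiv:1911.08860 — 5 statements merged into one kernel-verified Lean document; each statement's English description precedes it below -/
import Mathlib

section
/- Let M^{(k)} be the k×k uniform B-spline blending matrix with entries m^{(k)}_{s,n} = (C^n_{k-1}/(k-1)!) Σ_{l=s}^{k-1} (-1)^{l-s} C^{l-s}_k (k-1-l)^{k-1-n}, and let the cumulative matrix M̃^{(k)} have entries m̃^{(k)}_{j,n} = Σ_{s=j}^{k-1} m^{(k)}_{s,n}. Then the first row of M̃^{(k)} equals the unit vector e_0, i.e., m̃^{(k)}_{0,n} = δ_{n,0} for all n = 0, …, k−1. -/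
open Finset fwdDiff

lemma fd_step (p : ℕ) : fwdDiff (1:ℕ) (fun x : ℕ ↦ (x:ℝ)^p)
    = ∑ i ∈ Finset.range p, (p.choose i : ℝ) • (fun x : ℕ ↦ (x:ℝ)^i) := by
  ext x
  simp only [fwdDiff, Finset.sum_apply, Pi.smul_apply, smul_eq_mul]
  push_cast
  rw [add_pow, Finset.sum_range_succ]
  simp [mul_comm]

lemma fd_pow (p : ℕ) :
    (∀ m, p < m → ∀ y, (fwdDiff (1:ℕ))^[m] (fun x : ℕ ↦ (x:ℝ)^p) y = 0) ∧
    (∀ y, (fwdDiff (1:ℕ))^[p] (fun x : ℕ ↦ (x:ℝ)^p) y = p.factorial) := by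
  induction p using Nat.strong_induction_on with
  | _ p IH =>
    constructor
    · intro m hm y
      obtain ⟨m', rfl⟩ := Nat.exists_eq_add_of_lt (Nat.zero_lt_of_lt hm)
      rw [zero_add] at *
      rw [Function.iterate_succ_apply, fd_step, fwdDiff_iter_finset_sum, Finset.sum_apply]
      refine Finset.sum_eq_zero fun i hi => ?_
      rw [fwdDiff_iter_const_smul, Pi.smul_apply,
        (IH i (Finset.mem_range.mp hi)).1 m' (lt_of_lt_of_le (Finset.mem_range.mp hi) (Nat.lt_succ_iff.mp hm)) y, smul_zero]
    · intro y
      match p with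
      | 0 => simp
      | p' + 1 =>
        rw [Function.iterate_succ_apply, fd_step, fwdDiff_iter_finset_sum, Finset.sum_apply,
          Finset.sum_range_succ]
        simp only [fwdDiff_iter_const_smul, Pi.smul_apply]
        have h1 : ∀ i ∈ Finset.range p',
            ((p'+1).choose i : ℝ) • (fwdDiff (1:ℕ))^[p'] (fun x : ℕ ↦ (x:ℝ)^i) y = 0 := by
          intro i hi
          rw [(IH i ((Finset.mem_range.mp hi).trans (Nat.lt_succ_self _))).1 p' (Finset.mem_range.mp hi) y, smul_zero]
        rw [Finset.sum_eq_zero h1, zero_add, (IH p' (Nat.lt_succ_self _)).2 y]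
        simp [Nat.factorial_succ, Nat.choose_succ_self_right]

lemma alt_partial (m l : ℕ) :
    ∑ j ∈ Finset.range (l+1), (-1:ℝ)^j * ((m+1).choose j) = (-1)^l * (m.choose l) := by
  induction l with
  | zero => simp
  | succ l IH =>
    rw [Finset.sum_range_succ, IH, Nat.choose_succ_succ]
    push_cast
    ring

/-- The first row of the cumulative blending matrix `M̃^{(k)}` equals the
unit vector `e_0`: with `m^{(k)}_{s,n} = (C^n_{k-1}/(k-1)!) Σ_{l=s}^{k-1} (-1)^{l-s}
C^{l-s}_k (k-1-l)^{k-1-n}` and `m̃^{(k)}_{0,n} = Σ_{s=0}^{k-1} m^{(k)}_{s,n}`, one has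
`m̃^{(k)}_{0,n} = δ_{n,0}` for all `n = 0, …, k−1`. -/
theorem cumulative_blending_first_row (k : ℕ) (hk : 1 ≤ k) (n : ℕ) (hn : n ≤ k - 1) :
    ∑ s ∈ Finset.range k,
      (((k - 1).choose n : ℝ) / (Nat.factorial (k - 1) : ℝ)) *
        ∑ l ∈ Finset.Icc s (k - 1),
          (-1 : ℝ) ^ (l - s) * (k.choose (l - s) : ℝ) * (((k - 1 - l) ^ (k - 1 - n) : ℕ) : ℝ)
      = if n = 0 then 1 else 0 := by
  obtain ⟨m, rfl⟩ : ∃ m, k = m + 1 := ⟨k - 1, (Nat.succ_pred_eq_of_pos hk).symm⟩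
  simp only [Nat.add_sub_cancel] at hn ⊢
  rw [← Finset.mul_sum]
  have hswap : ∑ s ∈ Finset.range (m+1), ∑ l ∈ Finset.Icc s m,
      (-1:ℝ)^(l-s) * (((m+1).choose (l-s) : ℕ) : ℝ) * (((m-l)^(m-n) : ℕ) : ℝ)
      = ∑ l ∈ Finset.range (m+1), ∑ s ∈ Finset.range (l+1),
      (-1:ℝ)^(l-s) * (((m+1).choose (l-s) : ℕ) : ℝ) * (((m-l)^(m-n) : ℕ) : ℝ) := by
    refine Finset.sum_comm' ?_
    intro s l
    simp only [Finset.mem_range, Finset.mem_Icc]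
    omega
  rw [hswap]
  have hinner : ∀ l ∈ Finset.range (m+1),
      ∑ s ∈ Finset.range (l+1),
        (-1:ℝ)^(l-s) * (((m+1).choose (l-s) : ℕ) : ℝ) * (((m-l)^(m-n) : ℕ) : ℝ)
      = ((-1:ℝ)^l * (m.choose l : ℝ)) * (((m-l)^(m-n) : ℕ) : ℝ) := by
    intro l _
    rw [← Finset.sum_mul]
    congr 1
    have := Finset.sum_range_reflect (fun j => (-1:ℝ)^j * ((m+1).choose j)) (l+1)
    simp only [Nat.add_sub_cancel] at this
    rw [this, alt_partial]
  rw [Finset.sum_congr rfl hinner]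
  -- now connect to the m-th forward difference of x^(m-n) at 0
  have key : ∑ l ∈ Finset.range (m+1),
      ((-1:ℝ)^l * (m.choose l : ℝ)) * (((m-l)^(m-n) : ℕ) : ℝ)
      = (fwdDiff (1:ℕ))^[m] (fun x : ℕ ↦ (x:ℝ)^(m-n)) 0 := by
    rw [fwdDiff_iter_eq_sum_shift,
      ← Finset.sum_range_reflect
        (fun j => ((-1:ℤ)^(m-j) * (m.choose j : ℤ)) • (((0 + j • (1:ℕ) : ℕ) : ℝ))^(m-n)) (m+1)]
    refine Finset.sum_congr rfl fun l hl => ?_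
    have hlm : l ≤ m := Nat.lt_succ_iff.mp (Finset.mem_range.mp hl)
    simp only [Nat.add_sub_cancel, smul_eq_mul, mul_one, zero_add,
      Nat.sub_sub_self hlm, Nat.choose_symm hlm, zsmul_eq_mul]
    push_cast
    ring
  rw [key]
  rcases eq_or_ne n 0 with rfl | hn0
  · simp only [Nat.sub_zero, if_true]
    rw [(fd_pow m).2 0]
    simp only [Nat.choose_zero_right, Nat.cast_one, one_div]
    rw [inv_mul_cancel₀ (by exact_mod_cast m.factorial_ne_zero)]
  · rw [if_neg hn0, (fd_pow (m-n)).1 m (by omega) 0, mul_zero]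
end

section
/- For all integers k ≥ 1 and all n with 0 ≤ n ≤ k−1, the double binomial sum Σ_{s=0}^{k-1} Σ_{l=0}^{s} (−1)^l C^l_k (s−l)^{k-1-n} equals (k−1)!·δ_{n,0}, where by convention 0^0 = 1. -/
open Finset fwdDiff

private def gpow (m : ℕ) : ℕ → ℤ := fun x => (x : ℤ) ^ m

private lemma fwdDiff_gpow (m : ℕ) :
    Δ_[1] (gpow m) = ∑ i ∈ range m, (m.choose i : ℤ) • gpow i := by
  ext x
  simp only [fwdDiff, gpow, Finset.sum_apply, Pi.smul_apply, smul_eq_mul]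
  push_cast
  rw [add_pow]
  rw [Finset.sum_range_succ]
  simp [mul_comm]

private lemma fwdDiff_iter_gpow (m : ℕ) : ∀ r, m ≤ r →
    (Δ_[1])^[r] (gpow m) 0 = if r = m then (m.factorial : ℤ) else 0 := by
  induction m using Nat.strong_induction_on with
  | _ m IH =>
    intro r hr
    match r with
    | 0 =>
      interval_cases m
      simp [gpow]
    | (t+1) =>
      rw [Function.iterate_succ_apply, fwdDiff_gpow]
      rw [fwdDiff_iter_finset_sum]
      simp only [fwdDiff_iter_const_smul, Finset.sum_apply, Pi.smul_apply, smul_eq_mul]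
      have key : ∀ i ∈ range m, (m.choose i : ℤ) * (Δ_[1])^[t] (gpow i) 0
          = if i = t then (m.choose i : ℤ) * i.factorial else 0 := by
        intro i hi
        rw [mem_range] at hi
        rw [IH i hi t (by omega)]
        by_cases h : t = i <;> simp [h, eq_comm]
      rw [Finset.sum_congr rfl key, Finset.sum_ite_eq' (range m) t]
      by_cases hm : t + 1 = m
      · subst hm
        simp only [if_pos rfl, if_pos (Finset.mem_range.mpr (Nat.lt_succ_self t)),
          Nat.choose_succ_self_right, Nat.factorial_succ]
        push_cast
        ring
      · have : t ∉ range m := by simp; omega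
        simp [this, hm]

/-- For all integers `k ≥ 1` and `0 ≤ n ≤ k−1`,
`Σ_{s=0}^{k-1} Σ_{l=0}^{s} (−1)^l C^l_k (s−l)^{k-1-n} = (k−1)!·δ_{n,0}` (with `0^0 = 1`). -/
theorem double_binomial_sum (k n : ℕ) (hk : 1 ≤ k) (hn : n ≤ k - 1) :
    ∑ s ∈ Finset.range k, ∑ l ∈ Finset.range (s + 1),
      (-1 : ℤ) ^ l * (k.choose l : ℤ) * (((s - l) ^ (k - 1 - n) : ℕ) : ℤ)
      = if n = 0 then (Nat.factorial (k - 1) : ℤ) else 0 := by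
  set m := k - 1 - n with hm
  set H : ℕ → ℤ := fun j => ∑ i ∈ range j, ((i ^ m : ℕ) : ℤ) with hH
  have hΔ : Δ_[1] H = gpow m := by
    ext x
    simp [fwdDiff, hH, Finset.sum_range_succ, gpow]
  have step1 : ∑ s ∈ Finset.range k, ∑ l ∈ Finset.range (s + 1),
      (-1 : ℤ) ^ l * (k.choose l : ℤ) * (((s - l) ^ m : ℕ) : ℤ)
      = ∑ l ∈ range k, (-1 : ℤ) ^ l * (k.choose l : ℤ) * H (k - l) := by
    rw [Finset.sum_comm' (t' := range k) (s' := fun l => Finset.Ico l k)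
      (by intro x y; simp only [mem_range, Finset.mem_Ico]; omega)]
    refine Finset.sum_congr rfl fun l hl => ?_
    rw [← Finset.mul_sum, Finset.sum_Ico_eq_sum_range]
    congr 1
    refine Finset.sum_congr rfl fun i _ => ?_
    congr 2
    omega
  have step2 : (Δ_[1])^[k] H 0
      = ∑ l ∈ range k, (-1 : ℤ) ^ l * (k.choose l : ℤ) * H (k - l) := by
    rw [fwdDiff_iter_eq_sum_shift]
    have hcongr : ∑ j ∈ range (k + 1), ((-1 : ℤ) ^ (k - j) * (k.choose j : ℤ)) • H (0 + j • 1)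
        = ∑ j ∈ range (k + 1),
          (fun l => (-1 : ℤ) ^ l * (k.choose l : ℤ) * H (k - l)) (k + 1 - 1 - j) := by
      refine Finset.sum_congr rfl fun j hj => ?_
      rw [mem_range] at hj
      have hjk : j ≤ k := by omega
      have e1 : k + 1 - 1 - j = k - j := by omega
      have e2 : k - (k - j) = j := by omega
      simp only [e1, e2, smul_eq_mul, Nat.choose_symm hjk, smul_eq_mul, zero_add, smul_eq_mul]
      congr 1
      simp
    rw [hcongr,
      Finset.sum_range_reflect (fun l => (-1 : ℤ) ^ l * (k.choose l : ℤ) * H (k - l)) (k + 1),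
      Finset.sum_range_succ]
    have h0 : H (k - k) = 0 := by simp [hH]
    rw [h0, mul_zero, add_zero]
  rw [step1, ← step2]
  obtain ⟨t, rfl⟩ : ∃ t, k = t + 1 := ⟨k - 1, by omega⟩
  have htm : m = t - n := by omega
  rw [Function.iterate_succ_apply, hΔ, fwdDiff_iter_gpow m t (by omega)]
  rcases Nat.eq_zero_or_pos n with h | h
  · have ht : t = m := by omega
    have ht2 : t + 1 - 1 = m := by omega
    rw [if_pos ht, if_pos h, ht2]
  · have h1 : n ≠ 0 := by omega
    have h2 : t ≠ m := by omega
    simp [h1, h2]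
end

section
/- Let X(u) = X_i Π_{j=1}^{k-1} Exp(λ_j(u) d_j) be a cumulative B-spline of order k in a matrix Lie group. Define the recursion ω^{(1)} = 0 and ω^{(j)} = Ad_{A_{j-1}^{-1}} ω^{(j-1)} + λ̇_{j-1} d_{j-1}, where A_j = Exp(λ_j d_j). Then the time derivative satisfies Ẋ(u) = X(u) · (ω^{(k)})_∧. -/
open NormedSpace

attribute [local instance] Matrix.linftyOpNormedRing Matrix.linftyOpNormedAlgebra

/-!
Write `P_m(u) = A₁(u) ⋯ A_m(u)`. Each factor satisfies `Ȧ_j = A_j ξ_j` with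
`ξ_j = λ̇_j (d_j)_∧`, and multiplied on the left by `A_j` the recursion for `ω` reads
`A_j ω^{(j+1)}_∧ = ω^{(j)}_∧ A_j + A_j ξ_j`. By the product rule
`Ṗ_{m+1} = P_m ω^{(m+1)}_∧ A_{m+1} + P_m A_{m+1} ξ_{m+1} = P_{m+1} ω^{(m+2)}_∧`,
so induction on the number of factors gives `Ṗ_{k-1} = P_{k-1} ω^{(k)}_∧`.
-/

theorem HasDerivAt.exp_smul_const {𝕂 𝔸 : Type*} [RCLike 𝕂] [NormedRing 𝔸]
    [NormedAlgebra 𝕂 𝔸] [CompleteSpace 𝔸] {f : 𝕂 → 𝕂} {f' u : 𝕂} (hf : HasDerivAt f f' u)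
    (x : 𝔸) :
    HasDerivAt (fun v => NormedSpace.exp (f v • x)) (NormedSpace.exp (f u • x) * (f' • x)) u := by
  rw [mul_smul_comm]
  exact (hasDerivAt_exp_smul_const x (f u)).scomp u hf

theorem hasDerivAt_list_prod_range_of_left_velocity {𝔸 : Type*} [NormedRing 𝔸]
    [NormedAlgebra ℝ 𝔸] (B : ℕ → ℝ → 𝔸) (ξ W : ℕ → 𝔸) {u : ℝ} {m : ℕ}
    (hB : ∀ j < m, HasDerivAt (B j) (B j u * ξ j) u) (hW₀ : W 0 = 0)
    (hW : ∀ j < m, B j u * W (j + 1) = W j * B j u + B j u * ξ j) :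
    HasDerivAt (fun v => ((List.range m).map (B · v)).prod)
      (((List.range m).map (B · u)).prod * W m) u := by
  induction m with
  | zero => simpa [hW₀] using hasDerivAt_const u (1 : 𝔸)
  | succ m ih =>
    set P := ((List.range m).map (B · u)).prod
    have hP := ih (fun j hj => hB j (by omega)) (fun j hj => hW j (by omega))
    have hprod := hP.mul (hB m (by omega))
    simp only [List.prod_range_succ]
    refine hprod.congr_deriv ?_
    calc P * W m * B m u + P * (B m u * ξ m) = P * (W m * B m u + B m u * ξ m) := by
          noncomm_ring
      _ = P * B m u * W (m + 1) := by rw [← hW m (by omega), mul_assoc]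

theorem Matrix.mul_conj_nonsing_inv_add {n R : Type*} [Fintype n] [DecidableEq n] [CommRing R]
    {M : Matrix n n R} (hM : IsUnit M.det) (W ξ : Matrix n n R) :
    M * (M⁻¹ * W * M + ξ) = W * M + M * ξ := by
  rw [mul_add, ← mul_assoc, ← mul_assoc, Matrix.mul_nonsing_inv M hM, one_mul]

/-- For the cumulative B-spline
`X(u) = X_i · Π_{j=1}^{k-1} Exp(λ_j(u) d_j)` in a matrix Lie group, with the velocity
recursion `ω^{(1)} = 0`, `ω^{(j)} = Ad_{A_{j-1}⁻¹} ω^{(j-1)} + λ̇_{j-1} d_{j-1}`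
(expressed through the hat map: `hat(Ad_{A⁻¹} w) = A⁻¹ hat(w) A`), the time derivative
satisfies `Ẋ(u) = X(u) · (ω^{(k)})_∧`. -/
theorem cumulative_spline_first_deriv {n p : ℕ} (k : ℕ) (hk : 1 ≤ k)
    (hat : (Fin p → ℝ) →ₗ[ℝ] Matrix (Fin n) (Fin n) ℝ)
    (Xi : Matrix (Fin n) (Fin n) ℝ)
    (lam : ℕ → ℝ → ℝ) (d : ℕ → Fin p → ℝ)
    (hlam : ∀ j, Differentiable ℝ (lam j))
    (A : ℕ → ℝ → Matrix (Fin n) (Fin n) ℝ)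
    (hA : ∀ j u, A j u = exp (lam j u • hat (d j)))
    (X : ℝ → Matrix (Fin n) (Fin n) ℝ)
    (hX : ∀ u, X u = Xi * ((List.range (k - 1)).map (fun j => A (j + 1) u)).prod)
    (ω : ℕ → ℝ → Fin p → ℝ)
    (hω1 : ∀ u, ω 1 u = 0)
    (hωrec : ∀ j u, 2 ≤ j → j ≤ k →
      hat (ω j u) = (A (j - 1) u)⁻¹ * hat (ω (j - 1) u) * A (j - 1) u
        + deriv (lam (j - 1)) u • hat (d (j - 1)))
    (u : ℝ) :
    HasDerivAt X (X u * hat (ω k u)) u := by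
  have hA_deriv (j : ℕ) : HasDerivAt (A j) (A j u * (deriv (lam j) u • hat (d j))) u := by
    rw [funext (hA j)]
    exact ((hlam j u).hasDerivAt).exp_smul_const _
  have hA_det (j : ℕ) : IsUnit (A j u).det := by
    rw [← Matrix.isUnit_iff_isUnit_det, hA]
    exact Matrix.isUnit_exp _
  have hP := hasDerivAt_list_prod_range_of_left_velocity (u := u) (m := k - 1)
    (fun j => A (j + 1))
    (fun j => deriv (lam (j + 1)) u • hat (d (j + 1))) (fun j => hat (ω (j + 1) u))
    (fun j _ => hA_deriv (j + 1)) (by rw [hω1, map_zero])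
    (fun j _ => by
      rw [hωrec (j + 2) u (by omega) (by omega)]
      exact Matrix.mul_conj_nonsing_inv_add (hA_det (j + 1)) _ _)
  rw [funext hX]
  refine (hP.const_mul Xi).congr_deriv ?_
  rw [mul_assoc, Nat.sub_add_cancel hk]
end

section
/- Let X(u) = X_i Π_{j=1}^{k-1} Exp(λ_j(u) d_j) be a cumulative Lie group B-spline with velocity ω^{(k)} defined by the recursion ω^{(1)} = 0, ω^{(j)} = Ad_{A_{j-1}^{-1}} ω^{(j-1)} + λ̇_{j-1} d_{j-1}. Define ω̇^{(1)} = 0 and ω̇^{(j)} = λ̇_{j-1} [ω^{(j)}_∧, D_{j-1}]_∨ + Ad_{A_{j-1}^{-1}} ω̇^{(j-1)} + λ̈_{j-1} d_{j-1}. Then the second derivative satisfies Ẍ(u) = X(u) ((ω^{(k)})_∧² + (ω̇^{(k)})_∧). -/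
/-!
Write `A_j = exp (λ_j M_j)` and `Y_m = A_1 ⋯ A_m`. Induction on `m` gives `Y_m' = Y_m Ω_m`:
the product rule yields `(Y A)' = Y Ω A + Y λ' M A = (Y A) (A⁻¹ Ω A + λ' M)`, because `M`
commutes with `exp (λ M)`, and `A⁻¹ Ω A + λ' M` is exactly the velocity recursion. Differentiating
that recursion, with `(A⁻¹)' = -λ' M A⁻¹` and `A' = λ' A M`, gives
`λ' [A⁻¹ Ω A, M] + A⁻¹ Ω' A + λ'' M`, and `[A⁻¹ Ω A, M] = [A⁻¹ Ω A + λ' M, M]`: this is the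
acceleration recursion, so `Ω_m' = Ω̇_m`. Finally `X'' = (X Ω)' = X Ω² + X Ω̇`.
-/

open NormedSpace

attribute [local instance] Matrix.linftyOpNormedRing Matrix.linftyOpNormedAlgebra

section BanachAlgebra

variable {𝔸 : Type*} [NormedRing 𝔸] [NormedAlgebra ℝ 𝔸]

theorem commute_exp_smul (t : ℝ) (M : 𝔸) : Commute M (exp (t • M)) :=
  ((Commute.refl M).smul_right t).exp_right

theorem hasDerivAt_deriv_of_hasDerivAt_mul {X Ω : ℝ → 𝔸} {Ω' : 𝔸} {u : ℝ}
    (hX : ∀ t, HasDerivAt X (X t * Ω t) t) (hΩ : HasDerivAt Ω Ω' u) :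
    HasDerivAt (deriv X) (X u * (Ω u ^ 2 + Ω')) u := by
  rw [show deriv X = fun t => X t * Ω t from funext fun t => (hX t).deriv]
  refine ((hX u).mul hΩ).congr_deriv ?_
  rw [mul_add, sq, ← mul_assoc]

variable [CompleteSpace 𝔸]

theorem exp_mul_exp_neg (x : 𝔸) : exp x * exp (-x) = 1 := by
  have hball : ∀ y : 𝔸, y ∈ Metric.eball (0 : 𝔸) (expSeries ℝ 𝔸).radius := fun y =>
    (expSeries_radius_eq_top ℝ 𝔸).symm ▸ edist_lt_top _ _
  rw [← exp_add_of_commute_of_mem_ball (Commute.refl x).neg_right (hball x) (hball (-x)),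
    add_neg_cancel, exp_zero]

theorem hasDerivAt_exp_comp_smul {f : ℝ → ℝ} {f' x : ℝ} (M : 𝔸) (hf : HasDerivAt f f' x) :
    HasDerivAt (fun t => exp (f t • M)) (f' • (M * exp (f x • M))) x :=
  (hasDerivAt_exp_smul_const' M (f x)).scomp x hf

theorem hasDerivAt_mul_exp_comp_smul {Y : ℝ → 𝔸} {Ω : 𝔸} {lam : ℝ → ℝ} {lam' v : ℝ} (M : 𝔸)
    (hY : HasDerivAt Y (Y v * Ω) v) (hlam : HasDerivAt lam lam' v) :
    HasDerivAt (fun t => Y t * exp (lam t • M))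
      (Y v * exp (lam v • M) * (exp (-(lam v • M)) * Ω * exp (lam v • M) + lam' • M)) v := by
  refine (hY.mul (hasDerivAt_exp_comp_smul M hlam)).congr_deriv ?_
  rw [mul_add, mul_smul_comm, mul_smul_comm, (commute_exp_smul (lam v) M).eq]
  congr 1
  · have hYAB : Y v * exp (lam v • M) * exp (-(lam v • M)) = Y v := by
      rw [mul_assoc, exp_mul_exp_neg, mul_one]
    simp only [← mul_assoc, hYAB]
  · rw [mul_assoc]

theorem hasDerivAt_conj_exp_comp_smul_add {Ω : ℝ → 𝔸} {Ω' : 𝔸} {lam lam₁ : ℝ → ℝ}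
    {lam₂ v : ℝ} (M : 𝔸) (hΩ : HasDerivAt Ω Ω' v) (hlam : HasDerivAt lam (lam₁ v) v)
    (hlam₁ : HasDerivAt lam₁ lam₂ v) :
    HasDerivAt (fun t => exp (-(lam t • M)) * Ω t * exp (lam t • M) + lam₁ t • M)
      (lam₁ v • ⁅exp (-(lam v • M)) * Ω v * exp (lam v • M) + lam₁ v • M, M⁆
        + exp (-(lam v • M)) * Ω' * exp (lam v • M) + lam₂ • M) v := by
  have hB : HasDerivAt (fun t => exp (-(lam t • M)))
      (-lam₁ v • (M * exp (-(lam v • M)))) v := by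
    simpa only [Pi.neg_apply, neg_smul] using hasDerivAt_exp_comp_smul M hlam.neg
  refine (((hB.mul hΩ).mul (hasDerivAt_exp_comp_smul M hlam)).add
    (hlam₁.smul_const M)).congr_deriv ?_
  set A := exp (lam v • M)
  set B := exp (-(lam v • M))
  have hAM : M * A = A * M := (commute_exp_smul (lam v) M).eq
  have hbracket : ⁅B * Ω v * A + lam₁ v • M, M⁆ = B * Ω v * A * M - M * (B * Ω v * A) := by
    rw [Ring.lie_def, add_mul, mul_add, smul_mul_assoc, mul_smul_comm]
    abel
  rw [hbracket, hAM]
  simp only [Pi.mul_apply, smul_sub, add_mul, neg_smul, neg_mul, smul_mul_assoc, mul_smul_comm,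
    mul_assoc]
  abel

section Recursion

variable {K : ℕ} {lam : ℕ → ℝ → ℝ} {M : ℕ → 𝔸} {Ω Ω' : ℕ → ℝ → 𝔸}

theorem hasDerivAt_list_prod_exp_smul_of_recursion (hlam : ∀ j, Differentiable ℝ (lam j))
    (hΩ0 : ∀ t, Ω 0 t = 0)
    (hΩ : ∀ j t, j < K → Ω (j + 1) t
      = exp (-(lam j t • M j)) * Ω j t * exp (lam j t • M j) + deriv (lam j) t • M j) :
    ∀ m ≤ K, ∀ t, HasDerivAt (fun t => ((List.range m).map fun j => exp (lam j t • M j)).prod)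
      (((List.range m).map fun j => exp (lam j t • M j)).prod * Ω m t) t := by
  intro m
  induction m with
  | zero =>
    intro _ t
    simpa [hΩ0] using hasDerivAt_const t (1 : 𝔸)
  | succ m ih =>
    intro hm t
    simp only [List.range_succ, List.map_append, List.prod_append, List.map_singleton,
      List.prod_singleton]
    rw [hΩ m t hm]
    exact hasDerivAt_mul_exp_comp_smul (M m) (ih (by omega) t) (hlam m t).hasDerivAt

theorem hasDerivAt_of_conj_exp_recursion (hlam : ∀ j, Differentiable ℝ (lam j))
    (hlam' : ∀ j, Differentiable ℝ (deriv (lam j)))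
    (hΩ0 : ∀ t, Ω 0 t = 0) (hΩ'0 : ∀ t, Ω' 0 t = 0)
    (hΩ : ∀ j t, j < K → Ω (j + 1) t
      = exp (-(lam j t • M j)) * Ω j t * exp (lam j t • M j) + deriv (lam j) t • M j)
    (hΩ' : ∀ j t, j < K → Ω' (j + 1) t
      = deriv (lam j) t • ⁅Ω (j + 1) t, M j⁆ + exp (-(lam j t • M j)) * Ω' j t * exp (lam j t • M j)
        + deriv (deriv (lam j)) t • M j) :
    ∀ m ≤ K, ∀ t, HasDerivAt (Ω m) (Ω' m t) t := by
  intro m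
  induction m with
  | zero =>
    intro _ t
    rw [show Ω 0 = fun _ => 0 from funext hΩ0, hΩ'0]
    exact hasDerivAt_const t 0
  | succ m ih =>
    intro hm t
    rw [hΩ' m t hm, show Ω (m + 1) = _ from funext fun t => hΩ m t hm]
    exact hasDerivAt_conj_exp_comp_smul_add (M m) (ih (by omega) t) (hlam m t).hasDerivAt
      (hlam' m t).hasDerivAt

end Recursion

end BanachAlgebra

/-- For the cumulative Lie group B-spline
`X(u) = X_i Π_{j=1}^{k-1} Exp(λ_j(u) d_j)` with velocity recursion
`ω^{(1)} = 0`, `ω^{(j)} = Ad_{A_{j-1}⁻¹} ω^{(j-1)} + λ̇_{j-1} d_{j-1}` and acceleration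
recursion `ω̇^{(1)} = 0`,
`ω̇^{(j)} = λ̇_{j-1}[ω^{(j)}_∧, D_{j-1}]_∨ + Ad_{A_{j-1}⁻¹} ω̇^{(j-1)} + λ̈_{j-1} d_{j-1}`
(expressed through the hat map), the second derivative satisfies
`Ẍ(u) = X(u) ((ω^{(k)})_∧² + (ω̇^{(k)})_∧)`. -/
theorem cumulative_spline_second_deriv {n p : ℕ} (k : ℕ) (hk : 1 ≤ k)
    (hat : (Fin p → ℝ) →ₗ[ℝ] Matrix (Fin n) (Fin n) ℝ)
    (Xi : Matrix (Fin n) (Fin n) ℝ)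
    (lam : ℕ → ℝ → ℝ) (d : ℕ → Fin p → ℝ)
    (hlam : ∀ j, ContDiff ℝ 2 (lam j))
    (A : ℕ → ℝ → Matrix (Fin n) (Fin n) ℝ)
    (hA : ∀ j u, A j u = exp (lam j u • hat (d j)))
    (X : ℝ → Matrix (Fin n) (Fin n) ℝ)
    (hX : ∀ u, X u = Xi * ((List.range (k - 1)).map (fun j => A (j + 1) u)).prod)
    (ω ωd : ℕ → ℝ → Fin p → ℝ)
    (hω1 : ∀ u, ω 1 u = 0) (hωd1 : ∀ u, ωd 1 u = 0)
    (hωrec : ∀ j u, 2 ≤ j → j ≤ k →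
      hat (ω j u) = (A (j - 1) u)⁻¹ * hat (ω (j - 1) u) * A (j - 1) u
        + deriv (lam (j - 1)) u • hat (d (j - 1)))
    (hωdrec : ∀ j u, 2 ≤ j → j ≤ k →
      hat (ωd j u)
        = deriv (lam (j - 1)) u •
            (hat (ω j u) * hat (d (j - 1)) - hat (d (j - 1)) * hat (ω j u))
          + (A (j - 1) u)⁻¹ * hat (ωd (j - 1) u) * A (j - 1) u
          + deriv (deriv (lam (j - 1))) u • hat (d (j - 1)))
    (u : ℝ) :
    HasDerivAt (deriv X) (X u * (hat (ω k u) ^ 2 + hat (ωd k u))) u := by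
  obtain ⟨k, rfl⟩ := Nat.exists_eq_add_of_le' hk
  have hΩ : ∀ j t, j < k → hat (ω (j + 1 + 1) t)
      = exp (-(lam (j + 1) t • hat (d (j + 1)))) * hat (ω (j + 1) t)
          * exp (lam (j + 1) t • hat (d (j + 1))) + deriv (lam (j + 1)) t • hat (d (j + 1)) :=
    fun j t hj => by simpa [hA, ← Matrix.exp_neg] using hωrec (j + 2) t (by omega) (by omega)
  have hΩ' : ∀ j t, j < k → hat (ωd (j + 1 + 1) t)
      = deriv (lam (j + 1)) t • ⁅hat (ω (j + 1 + 1) t), hat (d (j + 1))⁆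
        + exp (-(lam (j + 1) t • hat (d (j + 1)))) * hat (ωd (j + 1) t)
          * exp (lam (j + 1) t • hat (d (j + 1)))
        + deriv (deriv (lam (j + 1))) t • hat (d (j + 1)) :=
    fun j t hj => by
      simpa [hA, ← Matrix.exp_neg, Ring.lie_def] using hωdrec (j + 2) t (by omega) (by omega)
  have hlam₁ : ∀ j, Differentiable ℝ (lam (j + 1)) := fun j =>
    (hlam (j + 1)).differentiable (by norm_num)
  have hprod := hasDerivAt_list_prod_exp_smul_of_recursion (Ω := fun j t => hat (ω (j + 1) t))
    (M := fun j => hat (d (j + 1))) hlam₁ (by simp [hω1]) hΩ k le_rfl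
  have hXprod :
      X = fun t => Xi * ((List.range k).map fun j => exp (lam (j + 1) t • hat (d (j + 1)))).prod :=
    funext fun t => by simp [hX, hA]
  have hX' : ∀ t, HasDerivAt X (X t * hat (ω (k + 1) t)) t := fun t => by
    rw [hXprod]
    exact ((hprod t).const_mul Xi).congr_deriv (mul_assoc _ _ _).symm
  have hvel := hasDerivAt_of_conj_exp_recursion (Ω := fun j t => hat (ω (j + 1) t))
    (Ω' := fun j t => hat (ωd (j + 1) t)) (M := fun j => hat (d (j + 1))) hlam₁
    (fun j => (hlam (j + 1)).differentiable_deriv_two) (by simp [hω1]) (by simp [hωd1]) hΩ hΩ'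
    k le_rfl u
  -- elaborated without the expected type: unifying with the goal's `Matrix` topology times out
  exact (hasDerivAt_deriv_of_hasDerivAt_mul hX' hvel :)
end

section
/- The matrices J_r(x) = Id − ((1−cos‖x‖)/‖x‖²) x_∧ + ((‖x‖−sin‖x‖)/‖x‖³) x_∧² and K(x) = Id + (1/2) x_∧ + (1/‖x‖² − (1+cos‖x‖)/(2‖x‖ sin‖x‖)) x_∧² are mutually inverse for x ∈ ℝ³ with 0 < ‖x‖ < π, i.e., J_r(x) K(x) = Id. -/
/-! Since `x_∧³ = -‖x‖² x_∧`, products of quadratic polynomials in `x_∧` reduce to quadratic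
polynomials again, so `J_r(x) K(x) = Id + α x_∧ + β x_∧²`, where, once the denominators
`‖x‖` and `sin ‖x‖` are cleared, `α = 0` is `sin² + cos² = 1` and `β = 0` is a polynomial identity. -/

open Matrix

/-- The hat map `ℝ³ → so(3)`. -/
def hat (v : Fin 3 → ℝ) : Matrix (Fin 3) (Fin 3) ℝ :=
  !![0, -v 2, v 1; v 2, 0, -v 0; -v 1, v 0, 0]

/-- Euclidean norm on `ℝ³`. -/
noncomputable def nrm (x : Fin 3 → ℝ) : ℝ := Real.sqrt (x 0 ^ 2 + x 1 ^ 2 + x 2 ^ 2)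

/-- The right Jacobian of SO(3) in closed form. -/
noncomputable def Jr (x : Fin 3 → ℝ) : Matrix (Fin 3) (Fin 3) ℝ :=
  1 - ((1 - Real.cos (nrm x)) / nrm x ^ 2) • hat x
    + ((nrm x - Real.sin (nrm x)) / nrm x ^ 3) • (hat x * hat x)

/-- The claimed inverse of the right Jacobian. -/
noncomputable def JrInv (x : Fin 3 → ℝ) : Matrix (Fin 3) (Fin 3) ℝ :=
  1 + (1 / 2 : ℝ) • hat x
    + (1 / nrm x ^ 2 - (1 + Real.cos (nrm x)) / (2 * nrm x * Real.sin (nrm x))) •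
        (hat x * hat x)

theorem one_sub_smul_add_smul_mul_one_add_smul_add_smul {R M : Type*} [CommRing R] [Ring M]
    [Algebra R M] {A : M} {s : R} (hA : A * A * A = s • A) (a b c d : R) :
    (1 - a • A + b • (A * A)) * (1 + c • A + d • (A * A)) =
      1 + (c - a - s * (a * d - b * c)) • A + (d - a * c + b + s * (b * d)) • (A * A) := by
  have hA4 : A * A * (A * A) = s • (A * A) := by
    rw [← mul_assoc, hA, smul_mul_assoc]
  have hA3 : A * (A * A) = s • A := by rw [← mul_assoc, hA]
  simp only [add_mul, sub_mul, mul_add, mul_sub, one_mul, mul_one, smul_mul_assoc,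
    mul_smul_comm, smul_smul, hA, hA3, hA4]
  module

theorem nrm_sq (x : Fin 3 → ℝ) : nrm x ^ 2 = x 0 ^ 2 + x 1 ^ 2 + x 2 ^ 2 :=
  Real.sq_sqrt (by positivity)

theorem hat_mul_hat_mul_hat (x : Fin 3 → ℝ) : hat x * hat x * hat x = (-nrm x ^ 2) • hat x := by
  ext i j
  fin_cases i <;> fin_cases j <;>
    simp [hat, Matrix.mul_apply, Fin.sum_univ_three, nrm_sq] <;> ring

/-- The matrices `J_r(x)` and
`K(x) = Id + (1/2) x_∧ + (1/‖x‖² − (1+cos‖x‖)/(2‖x‖ sin‖x‖)) x_∧²` are mutually inverse for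
`0 < ‖x‖ < π`, i.e. `J_r(x) K(x) = Id`. -/
theorem right_jacobian_inverse (x : Fin 3 → ℝ) (h0 : 0 < nrm x) (hπ : nrm x < Real.pi) :
    Jr x * JrInv x = 1 := by
  set t := nrm x
  have ht : t ≠ 0 := h0.ne'
  have hs : Real.sin t ≠ 0 := (Real.sin_pos_of_pos_of_lt_pi h0 hπ).ne'
  rw [Jr, JrInv, one_sub_smul_add_smul_mul_one_add_smul_add_smul (hat_mul_hat_mul_hat x)]
  have hcoeff_hat : 1 / 2 - (1 - Real.cos t) / t ^ 2 - -t ^ 2 *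
      ((1 - Real.cos t) / t ^ 2 * (1 / t ^ 2 - (1 + Real.cos t) / (2 * t * Real.sin t)) -
        (t - Real.sin t) / t ^ 3 * (1 / 2)) = 0 := by
    field_simp
    linear_combination t * Real.sin_sq_add_cos_sq t
  have hcoeff_hat_sq : 1 / t ^ 2 - (1 + Real.cos t) / (2 * t * Real.sin t) -
      (1 - Real.cos t) / t ^ 2 * (1 / 2) + (t - Real.sin t) / t ^ 3 + -t ^ 2 *
      ((t - Real.sin t) / t ^ 3 * (1 / t ^ 2 - (1 + Real.cos t) / (2 * t * Real.sin t))) = 0 := by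
    field_simp
    ring
  rw [hcoeff_hat, hcoeff_hat_sq, zero_smul, zero_smul, add_zero, add_zero]
end
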